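/- Let V and W be finite types, φ : V × W → ℝ, and define the linear map T sending ψ : V × W → ℝ to T ψ : V → ℝ given by (T ψ)(v) = ∑_{w ∈ W} φ(v, w) · ψ(v, w). Let B be a compact convex subset of the space V × W → ℝ such that for every ψ ∈ B the function T ψ is nonnegative and has positive total sum ∑_{v ∈ V} (T ψ)(v) > 0. Then: (i) the set 𝒩(T '' B) is convex, and (ii) the extreme points of 𝒩(T '' B) are contained in 𝒩(T '' ext(B)), where ext denotes extreme points and 𝒩 is the normalization operator 𝒩(S) = { g / (∑_{v ∈ V} g(v)) : g ∈ S } on sets of functions V → ℝ. -/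

import Mathlib

/-- The normalization operator: each function in `S` is divided by its total sum. -/
noncomputable def normSet {V : Type*} [Fintype V] (S : Set (V → ℝ)) : Set (V → ℝ) :=
  {g | ∃ ψ' ∈ S, g = (∑ v, ψ' v)⁻¹ • ψ'}

/-!
For functions with positive sums and positive weights `a`, `b`, normalization sends
`a • g₁ + b • g₂` to a convex combination of the normalized `g₁` and `g₂` with weights proportional
to `a * ∑ g₁` and `b * ∑ g₂`. Reweighting by `1 / ∑ gᵢ` therefore makes the normalized image of a
convex set convex. The same formula shows that `ψ ↦ 𝒩(T ψ)` maps open segments of `B` into open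
segments, so the fibre in `B` over an extreme point of the image is a compact extreme subset of
`B`; by the Krein–Milman lemma it has an extreme point, which is then extreme in `B`.
-/

open Set

section ExtremePoints

variable {E F : Type*} [AddCommGroup E] [Module ℝ E] [AddCommGroup F] [Module ℝ F] {s : Set E}

theorem isExtreme_sep_eq {f : E → F}
    (hseg : ∀ x ∈ s, ∀ y ∈ s, MapsTo f (openSegment ℝ x y) (openSegment ℝ (f x) (f y)))
    {w : F} (hw : w ∈ extremePoints ℝ (f '' s)) : IsExtreme ℝ s {x ∈ s | f x = w} :=
  ⟨sep_subset _ _, fun x hx y hy _ ⟨_, hzw⟩ hz ↦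
    ⟨hx, hw.2 (mem_image_of_mem f hx) (mem_image_of_mem f hy) (hzw ▸ hseg x hx y hy hz)⟩⟩

variable [TopologicalSpace E] [T2Space E] [IsTopologicalAddGroup E] [ContinuousSMul ℝ E]
  [LocallyConvexSpace ℝ E] [TopologicalSpace F] [T1Space F]

theorem surjOn_extremePoints_image_of_mapsTo_openSegment {f : E → F} (hs : IsCompact s)
    (hf : ContinuousOn f s)
    (hseg : ∀ x ∈ s, ∀ y ∈ s, MapsTo f (openSegment ℝ x y) (openSegment ℝ (f x) (f y))) :
    SurjOn f (extremePoints ℝ s) (extremePoints ℝ (f '' s)) := by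
  intro w hw
  have hfibre : IsCompact {x ∈ s | f x = w} :=
    hs.of_isClosed_subset (hf.preimage_isClosed_of_isClosed hs.isClosed isClosed_singleton)
      (sep_subset _ _)
  obtain ⟨x, hxs, hxw⟩ := extremePoints_subset hw
  obtain ⟨z, hz⟩ := hfibre.extremePoints_nonempty ⟨x, hxs, hxw⟩
  exact ⟨z, (isExtreme_sep_eq hseg hw).extremePoints_subset_extremePoints hz,
    (extremePoints_subset hz).2⟩

end ExtremePoints

section Normalize

variable {V : Type*} [Fintype V]

noncomputable def normalizeSum (g : V → ℝ) : V → ℝ := (∑ v, g v)⁻¹ • g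

theorem normSet_eq_image (S : Set (V → ℝ)) : normSet S = normalizeSum '' S := by
  ext g
  exact exists_congr fun _ ↦ and_congr_right fun _ ↦ eq_comm

theorem sum_normalizeSum {g : V → ℝ} (hg : ∑ v, g v ≠ 0) : ∑ v, normalizeSum g v = 1 := by
  simp only [normalizeSum, Pi.smul_apply, smul_eq_mul, ← Finset.mul_sum, inv_mul_cancel₀ hg]

theorem normalizeSum_of_sum_eq_one {g : V → ℝ} (hg : ∑ v, g v = 1) : normalizeSum g = g := by
  rw [normalizeSum, hg, inv_one, one_smul]

theorem normalizeSum_smul {c : ℝ} (hc : c ≠ 0) (g : V → ℝ) :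
    normalizeSum (c • g) = normalizeSum g := by
  simp only [normalizeSum, Pi.smul_apply, smul_eq_mul, ← Finset.mul_sum, smul_smul, mul_inv]
  congr 1
  field_simp

theorem continuousOn_normalizeSum :
    ContinuousOn (normalizeSum (V := V)) {g | ∑ v, g v ≠ 0} :=
  have hsum : Continuous fun g : V → ℝ ↦ ∑ v, g v :=
    continuous_finsetSum _ fun v _ ↦ continuous_apply v
  (hsum.continuousOn.inv₀ fun _ hg ↦ hg).smul continuousOn_id

theorem sum_smul_add_smul (g₁ g₂ : V → ℝ) (a b : ℝ) :
    ∑ v, (a • g₁ + b • g₂) v = a * (∑ v, g₁ v) + b * ∑ v, g₂ v := by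
  simp only [Pi.add_apply, Pi.smul_apply, smul_eq_mul, Finset.sum_add_distrib, Finset.mul_sum]

theorem normalizeSum_smul_add_smul {g₁ g₂ : V → ℝ} (h₁ : ∑ v, g₁ v ≠ 0) (h₂ : ∑ v, g₂ v ≠ 0)
    {a b : ℝ} (hab : a * (∑ v, g₁ v) + b * ∑ v, g₂ v ≠ 0) :
    normalizeSum (a • g₁ + b • g₂) =
      (a * (∑ v, g₁ v) / (a * (∑ v, g₁ v) + b * ∑ v, g₂ v)) • normalizeSum g₁ +
        (b * (∑ v, g₂ v) / (a * (∑ v, g₁ v) + b * ∑ v, g₂ v)) • normalizeSum g₂ := by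
  rw [normalizeSum, sum_smul_add_smul, normalizeSum, normalizeSum, smul_add, smul_smul, smul_smul,
    smul_smul, smul_smul]
  congr 2 <;> field_simp

theorem normalizeSum_mem_openSegment {g₁ g₂ : V → ℝ} (h₁ : 0 < ∑ v, g₁ v) (h₂ : 0 < ∑ v, g₂ v)
    {g : V → ℝ} (hg : g ∈ openSegment ℝ g₁ g₂) :
    normalizeSum g ∈ openSegment ℝ (normalizeSum g₁) (normalizeSum g₂) := by
  obtain ⟨a, b, ha, hb, -, rfl⟩ := hg
  have hsum : 0 < a * (∑ v, g₁ v) + b * ∑ v, g₂ v := by positivity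
  refine ⟨_, _, by positivity, by positivity, ?_,
    (normalizeSum_smul_add_smul h₁.ne' h₂.ne' hsum.ne').symm⟩
  rw [← add_div, div_self hsum.ne']

theorem Convex.normalizeSum_image {S : Set (V → ℝ)} (hS : Convex ℝ S)
    (hpos : ∀ g ∈ S, 0 < ∑ v, g v) : Convex ℝ (normalizeSum '' S) := by
  rintro _ ⟨g₁, hg₁, rfl⟩ _ ⟨g₂, hg₂, rfl⟩ a b ha hb hab
  have h₁ := hpos g₁ hg₁
  have h₂ := hpos g₂ hg₂
  -- `a • normalizeSum g₁ + b • normalizeSum g₂` is a positive multiple `c • g` of some `g ∈ S`.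
  set c := a / (∑ v, g₁ v) + b / ∑ v, g₂ v
  have hc : 0 < c := by
    rcases ha.eq_or_lt with rfl | ha
    · have : 0 < b := by linarith
      positivity
    · positivity
  have hmem : (a / (∑ v, g₁ v) / c) • g₁ + (b / (∑ v, g₂ v) / c) • g₂ ∈ S :=
    hS hg₁ hg₂ (by positivity) (by positivity) (by rw [← add_div, div_self hc.ne'])
  refine ⟨_, hmem, ?_⟩
  have hscale : c • ((a / (∑ v, g₁ v) / c) • g₁ + (b / (∑ v, g₂ v) / c) • g₂) =
      a • normalizeSum g₁ + b • normalizeSum g₂ := by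
    simp only [normalizeSum, smul_add, smul_smul]
    congr 2 <;> field_simp
  rw [← normalizeSum_smul hc.ne', hscale, normalizeSum_of_sum_eq_one]
  rw [sum_smul_add_smul, sum_normalizeSum h₁.ne', sum_normalizeSum h₂.ne', mul_one, mul_one, hab]

end Normalize

theorem normSet_sum_product_image_convex_and_extremePoints_general
    (V W : Type*) [Fintype V] [Fintype W]
    (T : (V × W → ℝ) →ₗ[ℝ] (V → ℝ))
    (B : Set (V × W → ℝ)) (hB : Convex ℝ B) (hBcomp : IsCompact B)
    (hsum : ∀ ψ ∈ B, 0 < ∑ v, T ψ v) :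
    Convex ℝ (normSet (T '' B)) ∧
      Set.extremePoints ℝ (normSet (T '' B)) ⊆
        normSet (T '' (Set.extremePoints ℝ B)) := by
  refine ⟨?_, ?_⟩
  · rw [normSet_eq_image]
    exact (hB.linear_image T).normalizeSum_image (forall_mem_image.mpr hsum)
  · rw [normSet_eq_image, normSet_eq_image, image_image, image_image]
    have hcont : ContinuousOn (fun ψ ↦ normalizeSum (T ψ)) B :=
      continuousOn_normalizeSum.comp T.continuous_of_finiteDimensional.continuousOn
        fun ψ hψ ↦ (hsum ψ hψ).ne'
    refine surjOn_extremePoints_image_of_mapsTo_openSegment hBcomp hcont fun ψ₁ h₁ ψ₂ h₂ ψ hψ ↦ ?_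
    have hTψ : T ψ ∈ openSegment ℝ (T ψ₁) (T ψ₂) :=
      (image_openSegment ℝ T.toAffineMap ψ₁ ψ₂).subset (mem_image_of_mem _ hψ)
    exact normalizeSum_mem_openSegment (hsum ψ₁ h₁) (hsum ψ₂ h₂) hTψ

/-- The message-bound update `𝒩(T '' B)` of Anytime Exact Belief Propagation is a
convex set whose extreme points arise from extreme points of the input bound `B`. -/
theorem normSet_sum_product_image_convex_and_extremePoints
    (V W : Type*) [Fintype V] [Fintype W] (φ : V × W → ℝ)
    (T : (V × W → ℝ) →ₗ[ℝ] (V → ℝ))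
    (hT : ∀ ψ v, T ψ v = ∑ w : W, φ (v, w) * ψ (v, w))
    (B : Set (V × W → ℝ)) (hB : Convex ℝ B) (hBcomp : IsCompact B)
    (hnonneg : ∀ ψ ∈ B, ∀ v, 0 ≤ T ψ v)
    (hsum : ∀ ψ ∈ B, 0 < ∑ v, T ψ v) :
    Convex ℝ (normSet (T '' B)) ∧
      Set.extremePoints ℝ (normSet (T '' B)) ⊆
        normSet (T '' (Set.extremePoints ℝ B)) :=
  normSet_sum_product_image_convex_and_extremePoints_general V W T B hB hBcomp hsum
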